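/- arXiv:2508.16221 — 6 statements merged into one kernel-verified Lean document; each statement's English description precedes it below -/
import Mathlib

section
/- Let g : ℝⁿ → ℝᵐ be locally Lipschitz, let U ⊆ ℝⁿ be open and nonempty, and let N ⊆ ℝⁿ be a Lebesgue-null set with N_g ⊆ N. If there exists b > 0 such that ‖(dg)(z)‖ ≤ b for all z ∈ U ∖ N, then ‖g(z₁) − g(z₂)‖ ≤ b‖z₁ − z₂‖ for all z₁, z₂ ∈ ℝⁿ such that the segment [z₁,z₂] is contained in U. -/
/-!
Along a segment on which `g` is Lipschitz, `t ↦ g (x + t (y - x))` is absolutely continuous, and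
the Vitali covering argument behind the fundamental theorem of calculus bounds its increment by
the essential supremum of `‖(dg)‖ ‖y - x‖` along the segment. The segment `[z₁, z₂]` itself may
lie inside `N`, but by Fubini almost every translate `[z₁ + v, z₂ + v]` meets `N` only for a null
set of parameters. The bound therefore holds for a dense set of small `v`, and continuity of `g`
lets `v` tend to `0`.
-/

open Filter Set MeasureTheory

noncomputable section

abbrev Euc (k : ℕ) : Type := EuclideanSpace ℝ (Fin k)

open scoped NNReal Topology

variable {E F : Type*} [NormedAddCommGroup E] [NormedSpace ℝ E] [NormedAddCommGroup F]
  [NormedSpace ℝ F]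

theorem AbsolutelyContinuousOnInterval.dist_le_mul_of_ae_hasDerivAt {f f' : ℝ → F} {a b C : ℝ}
    (hab : a ≤ b) (hC : 0 ≤ C) (hf : AbsolutelyContinuousOnInterval f a b)
    (hf' : ∀ᵐ x, x ∈ Ioo a b → HasDerivAt f (f' x) x ∧ ‖f' x‖ ≤ C) :
    dist (f a) (f b) ≤ C * (b - a) := by
  -- The Vitali cover below samples the derivative at arbitrary left endpoints, so the bound
  -- has to hold everywhere: replace `f'` by `0` where it fails.
  set f'₀ : ℝ → F := fun x => if ‖f' x‖ ≤ C then f' x else 0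
  have hf'₀ : ∀ᵐ x, x ∈ Ioo a b → HasDerivAt f (f'₀ x) x := by
    filter_upwards [hf'] with x hx hxI
    simpa [f'₀, (hx hxI).2] using (hx hxI).1
  have hf'₀C (x : ℝ) : ‖f'₀ x‖ ≤ C := by
    simp only [f'₀]
    split_ifs with h
    exacts [h, by simpa using hC]
  refine le_of_forall_pos_le_add fun ε hε => ?_
  set η := ε / (b - a + 1)
  have hη : 0 < η := div_pos hε (by linarith)
  obtain ⟨u, hu, hdisj, hlen⟩ := exists_dist_slope_lt_pairwiseDisjoint_hasSum hab hf'₀ hη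
  have hpiece (z : u) : dist (f z.1.1) (f z.1.2) ≤ (C + η) * (z.1.2 - z.1.1) := by
    obtain ⟨⟨-, hz, -⟩, hslope⟩ := hu z z.2
    have hslope_le : ‖slope f z.1.1 z.1.2‖ ≤ C + η := by
      rw [dist_eq_norm] at hslope
      linarith [hf'₀C z.1.1, norm_le_insert' (slope f z.1.1 z.1.2) (f'₀ z.1.1)]
    rw [dist_comm, dist_eq_norm, ← vsub_eq_sub, ← sub_smul_slope, norm_smul,
      Real.norm_of_nonneg (by linarith), mul_comm]
    exact mul_le_mul_of_nonneg_right hslope_le (by linarith)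
  have hsummable : Summable fun z : u => dist (f z.1.1) (f z.1.2) :=
    (hlen.summable.mul_left (C + η)).of_nonneg_of_le (fun _ => dist_nonneg) hpiece
  have hηε : η * (b - a) ≤ ε := by
    rw [div_mul_eq_mul_div, div_le_iff₀ (by linarith)]
    nlinarith
  calc dist (f a) (f b) ≤ ∑' z : u, dist (f z.1.1) (f z.1.2) :=
        hf.dist_le_of_pairwiseDisjoint_hasSum hab (fun z hz => (hu z hz).1) hdisj hlen
          hsummable.hasSum
    _ ≤ (C + η) * (b - a) :=
        (hsummable.tsum_le_tsum hpiece (hlen.summable.mul_left _)).trans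
          (hlen.mul_left _).tsum_eq.le
    _ ≤ C * (b - a) + ε := by linarith

theorem dist_le_mul_of_lipschitzOnWith_of_ae_norm_fderiv_le {g : E → F} {x y : E} {K : ℝ≥0}
    {C : ℝ} (hC : 0 ≤ C) (hg : LipschitzOnWith K g (segment ℝ x y))
    (hd : ∀ᵐ t : ℝ, t ∈ Ioo 0 1 →
      DifferentiableAt ℝ g (AffineMap.lineMap x y t) ∧
        ‖fderiv ℝ g (AffineMap.lineMap x y t)‖ ≤ C) :
    dist (g x) (g y) ≤ C * dist x y := by
  have hf : AbsolutelyContinuousOnInterval (g ∘ AffineMap.lineMap x y) 0 1 := by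
    refine LipschitzOnWith.absolutelyContinuousOnInterval (K := K * nndist x y) ?_
    rw [uIcc_of_le zero_le_one]
    exact hg.comp (lipschitzWith_lineMap x y).lipschitzOnWith
      fun t ht => lineMap_mem_segment ℝ x y ht
  have key := hf.dist_le_mul_of_ae_hasDerivAt zero_le_one (mul_nonneg hC dist_nonneg)
    (f' := fun t => fderiv ℝ g (AffineMap.lineMap x y t) (y - x)) <| by
    filter_upwards [hd] with t ht htI
    obtain ⟨hdiff, hbound⟩ := ht htI
    refine ⟨hdiff.hasFDerivAt.comp_hasDerivAt t AffineMap.hasDerivAt_lineMap, ?_⟩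
    calc ‖fderiv ℝ g (AffineMap.lineMap x y t) (y - x)‖
        ≤ ‖fderiv ℝ g (AffineMap.lineMap x y t)‖ * ‖y - x‖ :=
          ContinuousLinearMap.le_opNorm _ _
      _ ≤ C * dist x y := by rw [dist_eq_norm, norm_sub_rev]; gcongr
  simpa using key

theorem isCompact_segment (x y : E) : IsCompact (segment ℝ x y) := by
  rw [segment_eq_image_lineMap]
  exact isCompact_Icc.image (by fun_prop)

theorem segment_add_subset_cthickening {x y v : E} {δ : ℝ} (hv : ‖v‖ ≤ δ) :
    segment ℝ (x + v) (y + v) ⊆ Metric.cthickening δ (segment ℝ x y) := by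
  rw [add_comm x, add_comm y, ← segment_translate_image]
  rintro _ ⟨p, hp, rfl⟩
  exact Metric.mem_cthickening_of_dist_le _ p δ _ hp (by simpa using hv)

theorem ae_ae_lineMap_add_notMem [MeasurableSpace E] [BorelSpace E] [SecondCountableTopology E]
    (μ : Measure E) [μ.IsAddRightInvariant] [SFinite μ] {N : Set E} (hN : μ N = 0) (x y : E) :
    ∀ᵐ v ∂μ, ∀ᵐ t : ℝ, AffineMap.lineMap (x + v) (y + v) t ∉ N := by
  set N' := toMeasurable μ N
  have hline (v : E) (t : ℝ) :
      AffineMap.lineMap (x + v) (y + v) t = v + AffineMap.lineMap x y t := by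
    simp only [AffineMap.lineMap_apply_module]
    module
  have hmeas : MeasurableSet {p : E × ℝ | p.1 + AffineMap.lineMap x y p.2 ∈ N'} :=
    (measurableSet_toMeasurable μ N).preimage (by fun_prop)
  have hnull : μ.prod volume {p : E × ℝ | p.1 + AffineMap.lineMap x y p.2 ∈ N'} = 0 := by
    rw [Measure.prod_apply_symm hmeas]
    have (t : ℝ) : μ ((· + AffineMap.lineMap x y t) ⁻¹' N') = 0 := by
      rw [measure_preimage_add_right, measure_toMeasurable, hN]
    exact (lintegral_congr this).trans lintegral_zero
  filter_upwards [Measure.measure_ae_null_of_prod_null hnull] with v hv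
  rw [ae_iff]
  refine measure_mono_null (fun t ht => ?_) hv
  simpa [hline] using subset_toMeasurable μ N (not_not.1 ht)

theorem ContinuousAt.le_of_ae_imp_le {X α : Type*} [TopologicalSpace X] [MeasurableSpace X]
    [TopologicalSpace α] [Preorder α] [ClosedIicTopology α] {μ : Measure X} [μ.IsOpenPosMeasure]
    {φ : X → α} {x : X} {c : α} {p : X → Prop} (hφ : ContinuousAt φ x) (hp : ∀ᵐ v ∂μ, p v)
    (hle : ∀ᶠ v in 𝓝 x, p v → φ v ≤ c) : φ x ≤ c := by
  have : (𝓝[{v | p v}] x).NeBot :=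
    mem_closure_iff_nhdsWithin_neBot.1 ((Measure.dense_of_ae hp).closure_eq ▸ mem_univ x)
  exact le_of_tendsto (hφ.tendsto.mono_left nhdsWithin_le_nhds)
    ((eventually_nhdsWithin_iff (s := {v | p v})).2 hle)

theorem norm_sub_le_of_fderiv_bound_general {n m : ℕ} (g : Euc n → Euc m)
    (hg : LocallyLipschitz g) (U : Set (Euc n)) (hU : IsOpen U)
    (N : Set (Euc n)) (hNnull : volume N = 0)
    (hNg : {z : Euc n | ¬ DifferentiableAt ℝ g z} ⊆ N)
    (b : ℝ) (hb : 0 < b)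
    (hbd : ∀ z ∈ U \ N, ‖fderiv ℝ g z‖ ≤ b) :
    ∀ z₁ z₂ : Euc n, segment ℝ z₁ z₂ ⊆ U → ‖g z₁ - g z₂‖ ≤ b * ‖z₁ - z₂‖ := by
  intro z₁ z₂ hseg
  obtain ⟨δ, hδ, hδU⟩ := (isCompact_segment z₁ z₂).exists_cthickening_subset_open hU hseg
  obtain ⟨K, hK⟩ := hg.locallyLipschitzOn.exists_lipschitzOnWith_of_compact
    ((isCompact_segment z₁ z₂).cthickening (r := δ))
  have htranslate : ∀ᶠ v in 𝓝 0, (∀ᵐ t : ℝ, AffineMap.lineMap (z₁ + v) (z₂ + v) t ∉ N) →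
      ‖g (z₁ + v) - g (z₂ + v)‖ ≤ b * ‖z₁ - z₂‖ := by
    filter_upwards [Metric.closedBall_mem_nhds 0 hδ] with v hv hline
    have hsub : segment ℝ (z₁ + v) (z₂ + v) ⊆ Metric.cthickening δ (segment ℝ z₁ z₂) :=
      segment_add_subset_cthickening (mem_closedBall_zero_iff.1 hv)
    rw [← dist_eq_norm, ← dist_eq_norm, ← dist_add_right z₁ z₂ v]
    refine dist_le_mul_of_lipschitzOnWith_of_ae_norm_fderiv_le hb.le (hK.mono hsub) ?_
    filter_upwards [hline] with t hN htI
    have hU' := hδU (hsub (lineMap_mem_segment ℝ _ _ (Ioo_subset_Icc_self htI)))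
    exact ⟨not_not.1 (mt (@hNg _) hN), hbd _ ⟨hU', hN⟩⟩
  have hcont : ContinuousAt (fun v => ‖g (z₁ + v) - g (z₂ + v)‖) 0 := by
    have := hg.continuous
    fun_prop
  simpa using hcont.le_of_ae_imp_le (ae_ae_lineMap_add_notMem volume hNnull z₁ z₂) htranslate

/-- If `g : ℝⁿ → ℝᵐ` is locally Lipschitz, `U` is open and nonempty, `N` is a null set
containing the set of points of non-differentiability of `g`, and `‖(dg)(z)‖ ≤ b` for
all `z ∈ U \ N`, then `‖g z₁ - g z₂‖ ≤ b ‖z₁ - z₂‖` whenever `[z₁, z₂] ⊆ U`. -/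
theorem norm_sub_le_of_fderiv_bound {n m : ℕ} (g : Euc n → Euc m)
    (hg : LocallyLipschitz g) (U : Set (Euc n)) (hU : IsOpen U) (hUne : U.Nonempty)
    (N : Set (Euc n)) (hNnull : volume N = 0)
    (hNg : {z : Euc n | ¬ DifferentiableAt ℝ g z} ⊆ N)
    (b : ℝ) (hb : 0 < b)
    (hbd : ∀ z ∈ U \ N, ‖fderiv ℝ g z‖ ≤ b) :
    ∀ z₁ z₂ : Euc n, segment ℝ z₁ z₂ ⊆ U → ‖g z₁ - g z₂‖ ≤ b * ‖z₁ - z₂‖ :=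
  norm_sub_le_of_fderiv_bound_general g hg U hU N hNnull hNg b hb hbd
end
end

section
/- Let g : ℝⁿ → ℝⁿ be locally Lipschitz, let U ⊆ ℝⁿ be open and nonempty, and let N ⊆ ℝⁿ be a Lebesgue-null set with N_g ⊆ N. If there exists c ∈ ℝ such that ⟨(dg)(z)ζ, ζ⟩ ≤ c‖ζ‖² for all ζ ∈ ℝⁿ and all z ∈ U ∖ N, then ⟨g(z₁) − g(z₂), z₁ − z₂⟩ ≤ c‖z₁ − z₂‖² for all z₁, z₂ ∈ ℝⁿ such that the segment [z₁,z₂] is contained in U. -/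
open Filter Set MeasureTheory
open scoped RealInnerProductSpace

noncomputable section

/-!
Along a line, `t ↦ ⟪g (w + t • v), v⟫` is Lipschitz, hence absolutely continuous, so its increment
over `[0, 1]` is the integral of its derivative `⟪(dg)(w + t • v) v, v⟫ ≤ c ‖v‖²`, provided the line
meets `N` in a null set. By Fubini this holds for almost every translate `w` of `z₂`. The
translated segments near `[z₂, z₁]` stay in a compact subset of `U` on which `g` is Lipschitz,
and the inequality passes to `w = z₂` by continuity.
-/

open Metric Topology
open scoped NNReal

theorem AbsolutelyContinuousOnInterval.sub_le_mul_of_ae_deriv_le {f : ℝ → ℝ} {a b m : ℝ}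
    (hab : a ≤ b) (hf : AbsolutelyContinuousOnInterval f a b)
    (hd : ∀ᵐ t, t ∈ Ioo a b → deriv f t ≤ m) : f b - f a ≤ m * (b - a) := by
  have hd' : deriv f ≤ᵐ[volume.restrict (Icc a b)] fun _ ↦ m := by
    rw [← Measure.restrict_congr_set Ioo_ae_eq_Icc]
    exact (ae_restrict_iff' measurableSet_Ioo).2 hd
  calc f b - f a = ∫ t in a..b, deriv f t := hf.integral_deriv_eq_sub.symm
    _ ≤ ∫ _ in a..b, m :=
      intervalIntegral.integral_mono_ae_restrict hab hf.intervalIntegrable_deriv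
        intervalIntegrable_const hd'
    _ = m * (b - a) := by rw [intervalIntegral.integral_const, smul_eq_mul, mul_comm]

theorem IsClosed.mem_of_ae_mem_nhds {X : Type*} [TopologicalSpace X] [MeasurableSpace X]
    {μ : Measure X} [μ.IsOpenPosMeasure] {S V : Set X} {x : X} (hS : IsClosed S) (hV : V ∈ 𝓝 x)
    (h : ∀ᵐ y ∂μ, y ∈ V → y ∈ S) : x ∈ S := by
  refine hS.closure_subset (mem_closure_iff_nhds.2 fun t ht ↦ ?_)
  obtain ⟨y, hy, hyt⟩ := (Measure.dense_of_ae h).exists_mem_open isOpen_interior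
    ⟨x, mem_interior_iff_mem_nhds.2 (inter_mem ht hV)⟩
  have hyt' := interior_subset hyt
  exact ⟨y, hyt'.1, hy hyt'.2⟩

theorem ae_ae_add_smul_notMem {E : Type*} [NormedAddCommGroup E] [NormedSpace ℝ E]
    [MeasurableSpace E] [BorelSpace E] [SecondCountableTopology E]
    {μ : Measure E} [μ.IsAddRightInvariant] [SFinite μ] {N : Set E} (hN : μ N = 0) (v : E) :
    ∀ᵐ w ∂μ, ∀ᵐ t : ℝ, w + t • v ∉ N := by
  set S : Set (E × ℝ) := (fun p ↦ p.1 + p.2 • v) ⁻¹' toMeasurable μ N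
  have hS : MeasurableSet S :=
    (measurableSet_toMeasurable μ N).preimage (by fun_prop)
  have hS0 : μ.prod volume S = 0 := by
    rw [Measure.prod_apply_symm hS]
    simp [S, preimage_preimage, measure_preimage_add_right, hN]
  refine Measure.ae_ae_of_ae_prod (p := fun p ↦ p.1 + p.2 • v ∉ N)
    (measure_mono_null (fun p hp ↦ ?_) hS0)
  exact subset_toMeasurable μ N (not_not.1 hp)

theorem add_smul_mem_segment {E : Type*} [AddCommGroup E] [Module ℝ E] (w v : E) {t : ℝ}
    (ht : t ∈ Icc (0 : ℝ) 1) : w + t • v ∈ segment ℝ w (w + v) := by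
  rw [segment_eq_image', add_sub_cancel_left]
  exact mem_image_of_mem _ ht

theorem lipschitzWith_add_smul {E : Type*} [NormedAddCommGroup E] [NormedSpace ℝ E] (w v : E) :
    LipschitzWith ‖v‖₊ (fun t : ℝ ↦ w + t • v) :=
  LipschitzWith.of_dist_le_mul fun t u ↦ by
    rw [dist_add_left, dist_eq_norm, dist_eq_norm, ← sub_smul, norm_smul, mul_comm, coe_nnnorm]

theorem inner_sub_le_of_ae_inner_fderiv_le {E : Type*} [NormedAddCommGroup E]
    [InnerProductSpace ℝ E] {g : E → E} {K : ℝ≥0} {w v : E} {m : ℝ}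
    (hg : LipschitzOnWith K g (segment ℝ w (w + v)))
    (hd : ∀ᵐ t : ℝ, t ∈ Ioo 0 1 →
      DifferentiableAt ℝ g (w + t • v) ∧ ⟪fderiv ℝ g (w + t • v) v, v⟫ ≤ m) :
    ⟪g (w + v) - g w, v⟫ ≤ m := by
  set φ : ℝ → ℝ := fun t ↦ ⟪v, g (w + t • v)⟫
  have hmaps : MapsTo (fun t : ℝ ↦ w + t • v) (uIcc 0 1) (segment ℝ w (w + v)) := fun t ht ↦
    add_smul_mem_segment w v (by rwa [uIcc_of_le zero_le_one] at ht)
  have hφ : AbsolutelyContinuousOnInterval φ 0 1 :=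
    ((innerSL ℝ v).lipschitz.comp_lipschitzOnWith
      (hg.comp (lipschitzWith_add_smul w v).lipschitzOnWith hmaps)).absolutelyContinuousOnInterval
  have hderiv : ∀ᵐ t, t ∈ Ioo (0 : ℝ) 1 → deriv φ t ≤ m := by
    filter_upwards [hd] with t ht ht01
    obtain ⟨hdiff, hle⟩ := ht ht01
    have hline : HasDerivAt (fun t : ℝ ↦ w + t • v) v t := by
      simpa using ((hasDerivAt_id t).smul_const v).const_add w
    have hφt : HasDerivAt φ ⟪v, fderiv ℝ g (w + t • v) v⟫ t :=
      (innerSL ℝ v).hasFDerivAt.comp_hasDerivAt t (hdiff.hasFDerivAt.comp_hasDerivAt t hline)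
    rw [hφt.deriv, real_inner_comm]
    exact hle
  have := hφ.sub_le_mul_of_ae_deriv_le zero_le_one hderiv
  simpa [φ, inner_sub_right, real_inner_comm] using this

theorem segment_add_subset_cthickening_s5 {E : Type*} [NormedAddCommGroup E] [NormedSpace ℝ E]
    {w z : E} (v : E) {δ : ℝ} (h : dist w z ≤ δ) :
    segment ℝ w (w + v) ⊆ cthickening δ (segment ℝ z (z + v)) := by
  rw [segment_eq_image', segment_eq_image', add_sub_cancel_left, add_sub_cancel_left]
  rintro _ ⟨t, ht, rfl⟩
  exact mem_cthickening_of_dist_le _ _ _ _ (mem_image_of_mem _ ht) (by rwa [dist_add_right])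

theorem inner_sub_le_of_fderiv_bound_general {n : ℕ} (g : Euc n → Euc n)
    (hg : LocallyLipschitz g) (U : Set (Euc n)) (hU : IsOpen U)
    (N : Set (Euc n)) (hNnull : volume N = 0)
    (hNg : {z : Euc n | ¬ DifferentiableAt ℝ g z} ⊆ N)
    (c : ℝ)
    (hbd : ∀ z ∈ U \ N, ∀ ζ : Euc n, ⟪(fderiv ℝ g z) ζ, ζ⟫ ≤ c * ‖ζ‖ ^ 2) :
    ∀ z₁ z₂ : Euc n, segment ℝ z₁ z₂ ⊆ U →
      ⟪g z₁ - g z₂, z₁ - z₂⟫ ≤ c * ‖z₁ - z₂‖ ^ 2 := by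
  intro z₁ z₂ hseg
  set v := z₁ - z₂
  have hz : z₂ + v = z₁ := add_sub_cancel z₂ z₁
  rw [segment_symm, ← hz] at hseg
  rw [← hz]
  have hcpt : IsCompact (segment ℝ z₂ (z₂ + v)) := by
    rw [segment_eq_image]
    exact isCompact_Icc.image (by fun_prop)
  obtain ⟨δ, hδ, hδU⟩ := hcpt.exists_cthickening_subset_open hU hseg
  obtain ⟨K, hK⟩ := hg.locallyLipschitzOn.exists_lipschitzOnWith_of_compact hcpt.cthickening
  have hgc := hg.continuous
  have hclosed : IsClosed {w | ⟪g (w + v) - g w, v⟫ ≤ c * ‖v‖ ^ 2} :=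
    isClosed_le (by fun_prop) continuous_const
  refine hclosed.mem_of_ae_mem_nhds (μ := volume) (closedBall_mem_nhds z₂ hδ) ?_
  filter_upwards [ae_ae_add_smul_notMem hNnull v] with w hw hwz
  have hsub := segment_add_subset_cthickening_s5 v (mem_closedBall.1 hwz)
  refine inner_sub_le_of_ae_inner_fderiv_le (hK.mono hsub) ?_
  filter_upwards [hw] with t htN ht
  have hpU : w + t • v ∈ U := hδU (hsub (add_smul_mem_segment w v (Ioo_subset_Icc_self ht)))
  exact ⟨not_not.1 fun h ↦ htN (hNg h), hbd _ ⟨hpU, htN⟩ v⟩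

/-- If `g : ℝⁿ → ℝⁿ` is locally Lipschitz, `U` is open and nonempty, `N` is a null set
containing the set of points of non-differentiability of `g`, and
`⟨(dg)(z) ζ, ζ⟩ ≤ c ‖ζ‖²` for all `ζ` and all `z ∈ U \ N`, then
`⟨g z₁ - g z₂, z₁ - z₂⟩ ≤ c ‖z₁ - z₂‖²` whenever `[z₁, z₂] ⊆ U`. -/
theorem inner_sub_le_of_fderiv_bound {n : ℕ} (g : Euc n → Euc n)
    (hg : LocallyLipschitz g) (U : Set (Euc n)) (hU : IsOpen U) (hUne : U.Nonempty)
    (N : Set (Euc n)) (hNnull : volume N = 0)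
    (hNg : {z : Euc n | ¬ DifferentiableAt ℝ g z} ⊆ N)
    (c : ℝ)
    (hbd : ∀ z ∈ U \ N, ∀ ζ : Euc n, ⟪(fderiv ℝ g z) ζ, ζ⟫ ≤ c * ‖ζ‖ ^ 2) :
    ∀ z₁ z₂ : Euc n, segment ℝ z₁ z₂ ⊆ U →
      ⟪g z₁ - g z₂, z₁ - z₂⟫ ≤ c * ‖z₁ - z₂‖ ^ 2 :=
  inner_sub_le_of_fderiv_bound_general g hg U hU N hNnull hNg c hbd
end
end

section
/- Let (v,x,y) be a pre-trajectory of the Lur'e system S^f on [t₀,τ), where 0 ≤ t₀ < τ < ∞. Then there exist τ_m with τ ≤ τ_m ≤ ∞ and a maximally defined pre-trajectory (v,x_m,y_m) of S^f on [t₀,τ_m) such that the restriction of (x_m,y_m) to [t₀,τ) equals (x,y). -/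
open MeasureTheory Filter Set
open scoped Topology RealInnerProductSpace ENNReal

noncomputable section

/-- The interval `[t₀, τ)`, where `τ` is an extended real number. -/
def Ival (t₀ : ℝ) (τ : EReal) : Set ℝ := {t : ℝ | t₀ ≤ t ∧ (t : EReal) < τ}

/-- Membership in `L¹_loc(ℝ₊, ℝ₊)`. -/
def L1locNonneg (φ : ℝ → ℝ) : Prop :=
  (∀ t, 0 ≤ φ t) ∧ ∀ r : ℝ, IntegrableOn φ (Icc 0 r) volume

/-- Membership in `L^∞_loc(ℝ₊, ℝ^k)`. -/
def LinftyLoc {k : ℕ} (v : ℝ → Euc k) : Prop :=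
  AEStronglyMeasurable v volume ∧
    ∀ r : ℝ, ∃ c : ℝ, ∀ᵐ t ∂volume, t ∈ Icc (0 : ℝ) r → ‖v t‖ ≤ c

/-- Caratheodory function: `f(t, ·)` is continuous for every `t` and `f(·, ξ)` is
measurable for every `ξ`. -/
def Caratheodory {p m : ℕ} (f : ℝ → Euc p → Euc m) : Prop :=
  (∀ t, Continuous (f t)) ∧ ∀ ξ, Measurable fun t => f t ξ

variable {n m me p : ℕ}

/-- `(v, x, y)` is a pre-trajectory of the Lur'e system `S^f` on `[t₀, τ)`:
`v ∈ L^∞_loc(ℝ₊)`, `x` is locally absolutely continuous on `[t₀, τ)` (expressed via the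
integrated form of the differential equation), `y` and `f(·, y(·))` are locally
integrable on `[t₀, τ)`, and the state and output equations hold a.e. on `[t₀, τ)`. -/
structure IsPreTraj (A : Euc n →L[ℝ] Euc n) (B : Euc m →L[ℝ] Euc n)
    (Be : Euc me →L[ℝ] Euc n) (C : Euc n →L[ℝ] Euc p) (D : Euc m →L[ℝ] Euc p)
    (De : Euc me →L[ℝ] Euc p) (f : ℝ → Euc p → Euc m)
    (v : ℝ → Euc me) (x : ℝ → Euc n) (y : ℝ → Euc p)
    (t₀ : ℝ) (τ : EReal) : Prop where
  ht₀ : 0 ≤ t₀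
  hτ : (t₀ : EReal) < τ
  hv : LinftyLoc v
  hxc : ContinuousOn x (Ival t₀ τ)
  hy : ∀ t ∈ Ival t₀ τ, IntegrableOn y (Icc t₀ t) volume
  hfy : ∀ t ∈ Ival t₀ τ, IntegrableOn (fun s => f s (y s)) (Icc t₀ t) volume
  hode : ∀ t ∈ Ival t₀ τ,
    x t = x t₀ + ∫ s in Icc t₀ t, (A (x s) + B (f s (y s)) + Be (v s))
  hout : ∀ᵐ t ∂volume, t ∈ Ival t₀ τ → y t = C (x t) + D (f t (y t)) + De (v t)

variable (A : Euc n →L[ℝ] Euc n) (B : Euc m →L[ℝ] Euc n) (Be : Euc me →L[ℝ] Euc n)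
  (C : Euc n →L[ℝ] Euc p) (D : Euc m →L[ℝ] Euc p) (De : Euc me →L[ℝ] Euc p)
  (f : ℝ → Euc p → Euc m)

/-- A maximally defined pre-trajectory: a pre-trajectory on `[t₀, τ)` admitting no
proper extension to a pre-trajectory on a larger interval `[t₀, τ')`. -/
def IsMaxPreTraj (v : ℝ → Euc me) (x : ℝ → Euc n) (y : ℝ → Euc p)
    (t₀ : ℝ) (τ : EReal) : Prop :=
  IsPreTraj A B Be C D De f v x y t₀ τ ∧
    ¬ ∃ (τ' : EReal) (x' : ℝ → Euc n) (y' : ℝ → Euc p), τ < τ' ∧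
        IsPreTraj A B Be C D De f v x' y' t₀ τ' ∧
        (∀ t ∈ Ival t₀ τ, x' t = x t) ∧
        ∀ᵐ t ∂volume, t ∈ Ival t₀ τ → y' t = y t

/-- The map `F(t, ξ) = ξ − D f(t, ξ)`. -/
def Fmap (t : ℝ) (ξ : Euc p) : Euc p := ξ - D (f t ξ)

/-- `F_t` is radially unbounded, locally uniformly in `t`. -/
def RadUnbddLocUnif : Prop :=
  ∀ ρ > (0 : ℝ), ∀ T : Set ℝ, T ⊆ Ici 0 → IsCompact T →
    ∃ σ ≥ (0 : ℝ), ∀ t ∈ T, ∀ ξ : Euc p, σ ≤ ‖ξ‖ → ρ ≤ ‖Fmap D f t ξ‖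

/-- Condition (⋆): for every compact `K ⊆ ℝ^p` there is `φ ∈ L¹_loc(ℝ₊, ℝ₊)` with
`sup_{ξ ∈ K} ‖f(t, ξ)‖ ≤ φ(t)` for all `t ≥ 0`. -/
def CondStar : Prop :=
  ∀ K : Set (Euc p), IsCompact K →
    ∃ φ : ℝ → ℝ, L1locNonneg φ ∧ ∀ t ≥ (0 : ℝ), ∀ ξ ∈ K, ‖f t ξ‖ ≤ φ t

/-- Condition (Lip): for every compact `K ⊆ ℝ^p` there is `λ ∈ L¹_loc(ℝ₊, ℝ₊)` with
`‖f(t, ξ) − f(t, ζ)‖ ≤ λ(t) ‖ξ − ζ‖` for all `ξ, ζ ∈ K` and all `t ≥ 0`. -/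
def CondLip : Prop :=
  ∀ K : Set (Euc p), IsCompact K →
    ∃ lam : ℝ → ℝ, L1locNonneg lam ∧
      ∀ t ≥ (0 : ℝ), ∀ ξ ∈ K, ∀ ζ ∈ K, ‖f t ξ - f t ζ‖ ≤ lam t * ‖ξ - ζ‖

/-- Forward completeness: every maximally defined pre-trajectory is defined on all
of `[t₀, ∞)`. -/
def ForwardComplete : Prop :=
  ∀ (v : ℝ → Euc me) (x : ℝ → Euc n) (y : ℝ → Euc p) (t₀ : ℝ) (τ : EReal),
    IsMaxPreTraj A B Be C D De f v x y t₀ τ → τ = ⊤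

/-- The uniqueness property: two pre-trajectories with the same input and the same
initial state coincide on the smaller interval of definition. -/
def UniquenessProp : Prop :=
  ∀ (v : ℝ → Euc me) (t₀ : ℝ) (τ τ' : EReal)
    (x x' : ℝ → Euc n) (y y' : ℝ → Euc p),
    IsPreTraj A B Be C D De f v x y t₀ τ →
    IsPreTraj A B Be C D De f v x' y' t₀ τ' →
    τ ≤ τ' → x t₀ = x' t₀ →
    (∀ t ∈ Ival t₀ τ, x t = x' t) ∧
      ∀ᵐ t ∂volume, t ∈ Ival t₀ τ → y t = y' t

/-- `im(C, D_e) = {C z + D_e w : z ∈ ℝⁿ, w ∈ ℝ^{m_e}}`. -/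
def imCDe : Set (Euc p) := {ξ | ∃ (z : Euc n) (w : Euc me), ξ = C z + De w}

/-- The fibre `F_t⁻¹(ξ) = {ζ : F_t(ζ) = ξ}`. -/
def Finv (t : ℝ) (ξ : Euc p) : Set (Euc p) := {ζ | Fmap D f t ζ = ξ}


/-! ### Auxiliary material for `exists_maximal_extension` -/

lemma Ival_mono' {t₀ : ℝ} {τ₁ τ₂ : EReal} (h : τ₁ ≤ τ₂) : Ival t₀ τ₁ ⊆ Ival t₀ τ₂ :=
  fun _ ht => ⟨ht.1, lt_of_lt_of_le ht.2 h⟩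

/-- The extension preorder on candidate triples. -/
def ExtRel (t₀ : ℝ) (a b : EReal × (ℝ → Euc n) × (ℝ → Euc p)) : Prop :=
  a.1 ≤ b.1 ∧ (∀ t ∈ Ival t₀ a.1, b.2.1 t = a.2.1 t) ∧
    ∀ᵐ t ∂volume, t ∈ Ival t₀ a.1 → b.2.2 t = a.2.2 t

lemma extRel_refl (t₀ : ℝ) (a : EReal × (ℝ → Euc n) × (ℝ → Euc p)) : ExtRel t₀ a a :=
  ⟨le_refl _, fun _ _ => rfl, Filter.Eventually.of_forall fun _ _ => rfl⟩

lemma extRel_trans {t₀ : ℝ} {a b c : EReal × (ℝ → Euc n) × (ℝ → Euc p)}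
    (hab : ExtRel t₀ a b) (hbc : ExtRel t₀ b c) : ExtRel t₀ a c := by
  refine ⟨hab.1.trans hbc.1, fun t ht => ?_, ?_⟩
  · rw [hbc.2.1 t (Ival_mono' hab.1 ht), hab.2.1 t ht]
  · filter_upwards [hab.2.2, hbc.2.2] with t h1 h2 ht
    rw [h2 (Ival_mono' hab.1 ht), h1 ht]

lemma extRel_symm {t₀ : ℝ} {a b : EReal × (ℝ → Euc n) × (ℝ → Euc p)}
    (heq : a.1 = b.1) (hab : ExtRel t₀ a b) : ExtRel t₀ b a := by
  refine ⟨le_of_eq heq.symm, fun t ht => (hab.2.1 t (by rw [heq]; exact ht)).symm, ?_⟩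
  filter_upwards [hab.2.2] with t h1 ht
  exact (h1 (by rw [heq]; exact ht)).symm

open Classical in
/-- Glue a sequence of functions along a sequence of intervals. -/
def glue {β : Type*} (t₀ : ℝ) (u : ℕ → EReal) (g : ℕ → ℝ → β) (g₀ : ℝ → β) : ℝ → β :=
  fun t => if hk : ∃ k, t ∈ Ival t₀ (u k) then g (Nat.find hk) t else g₀ t

open Classical in
lemma glue_eq {β : Type*} (t₀ : ℝ) (u : ℕ → EReal) (g : ℕ → ℝ → β) (g₀ : ℝ → β)
    {t : ℝ} (hk : ∃ k, t ∈ Ival t₀ (u k)) :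
    glue t₀ u g g₀ t = g (Nat.find hk) t ∧ t ∈ Ival t₀ (u (Nat.find hk)) :=
  ⟨dif_pos hk, Nat.find_spec hk⟩

/-- Every pre-trajectory of `S^f` on a bounded interval `[t₀, τ)` extends to a maximally
defined pre-trajectory `(v, x_m, y_m)` on some interval `[t₀, τ_m)` with `τ ≤ τ_m ≤ ∞`. -/
theorem exists_maximal_extension
    (hf : Caratheodory f)
    (v : ℝ → Euc me) (x : ℝ → Euc n) (y : ℝ → Euc p) (t₀ τ : ℝ)
    (h : IsPreTraj A B Be C D De f v x y t₀ (τ : EReal)) :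
    ∃ (τm : EReal) (xm : ℝ → Euc n) (ym : ℝ → Euc p),
      (τ : EReal) ≤ τm ∧
      IsMaxPreTraj A B Be C D De f v xm ym t₀ τm ∧
      (∀ t ∈ Ival t₀ (τ : EReal), xm t = x t) ∧
      ∀ᵐ t ∂volume, t ∈ Ival t₀ (τ : EReal) → ym t = y t := by
  classical
  set P : EReal × (ℝ → Euc n) × (ℝ → Euc p) → Prop := fun e =>
    IsPreTraj A B Be C D De f v e.2.1 e.2.2 t₀ e.1 ∧ (τ : EReal) ≤ e.1 ∧
      (∀ t ∈ Ival t₀ (τ : EReal), e.2.1 t = x t) ∧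
      (∀ᵐ t ∂volume, t ∈ Ival t₀ (τ : EReal) → e.2.2 t = y t) with hPdef
  have hPbase : P ((τ : EReal), x, y) :=
    ⟨h, le_refl _, fun _ _ => rfl, Filter.Eventually.of_forall fun _ _ => rfl⟩
  have hbound : ∀ c : Set {e // P e}, IsChain (fun a b => ExtRel t₀ a.1 b.1) c →
      ∃ ub : {e // P e}, ∀ a ∈ c, ExtRel t₀ a.1 ub.1 := by
    intro c hc
    rcases c.eq_empty_or_nonempty with rfl | hne
    · exact ⟨⟨_, hPbase⟩, fun a ha => absurd ha (notMem_empty a)⟩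
    have hcomp : ∀ a ∈ c, ∀ b ∈ c, a.1.1 ≤ b.1.1 → ExtRel t₀ a.1 b.1 := by
      intro a ha b hb hab
      rcases eq_or_ne a b with rfl | hne'
      · exact extRel_refl _ _
      rcases hc ha hb hne' with h' | h'
      · exact h'
      · exact extRel_symm (le_antisymm h'.1 hab) h'
    set T : Set EReal := (fun e : {e // P e} => e.1.1) '' c with hTdef
    have hTne : T.Nonempty := hne.image _
    obtain ⟨u, hu_mono, hu_tend, hu_mem⟩ := exists_seq_tendsto_sSup hTne (OrderTop.bddAbove T)
    set S := sSup T with hSdef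
    have hu_mem' : ∀ k : ℕ, ∃ a, a ∈ c ∧ a.1.1 = u k := fun k =>
      (Set.mem_image _ _ _).1 (hu_mem k)
    choose e he_mem he_eq using hu_mem'
    have hI : ∀ k : ℕ, Ival t₀ ((e k).1.1) = Ival t₀ (u k) := fun k => by rw [he_eq]
    have hSk : ∀ t : ℝ, (t : EReal) < S → ∃ k, t₀ ≤ t → t ∈ Ival t₀ (u k) := by
      intro t ht
      obtain ⟨k, hk⟩ := (hu_tend.eventually (eventually_gt_nhds ht)).exists
      exact ⟨k, fun h0 => ⟨h0, hk⟩⟩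
    have hle_S : ∀ a ∈ c, a.1.1 ≤ S := fun a ha => le_sSup ⟨a, ha, rfl⟩
    have hexk : ∀ a ∈ c, ∀ t ∈ Ival t₀ a.1.1, ∃ k, t ∈ Ival t₀ (u k) := by
      intro a ha t ht
      obtain ⟨k, hk⟩ := hSk t (lt_of_lt_of_le ht.2 (hle_S a ha))
      exact ⟨k, hk ht.1⟩
    set xm : ℝ → Euc n := glue t₀ u (fun k => (e k).1.2.1) x with hxmdef
    set ym : ℝ → Euc p := glue t₀ u (fun k => (e k).1.2.2) y with hymdef
    -- pointwise agreement of the state components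
    have hxagree : ∀ a ∈ c, ∀ b ∈ c, ∀ t, t ∈ Ival t₀ a.1.1 → t ∈ Ival t₀ b.1.1 →
        a.1.2.1 t = b.1.2.1 t := by
      intro a ha b hb t hta htb
      rcases le_total a.1.1 b.1.1 with hab | hab
      · exact ((hcomp a ha b hb hab).2.1 t hta).symm
      · exact (hcomp b hb a ha hab).2.1 t htb
    have hxm : ∀ a ∈ c, ∀ t ∈ Ival t₀ a.1.1, xm t = a.1.2.1 t := by
      intro a ha t ht
      obtain ⟨k, hk⟩ := hexk a ha t ht
      obtain ⟨hg1, hg2⟩ := glue_eq t₀ u (fun k => (e k).1.2.1) x ⟨k, hk⟩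
      rw [hxmdef, hg1]
      exact hxagree _ (he_mem _) a ha t (by rw [hI]; exact hg2) ht
    have hym : ∀ a ∈ c, ∀ᵐ t ∂volume, t ∈ Ival t₀ a.1.1 → ym t = a.1.2.2 t := by
      intro a ha
      have hpair : ∀ k : ℕ, ∀ᵐ t ∂volume, t ∈ Ival t₀ a.1.1 → t ∈ Ival t₀ (u k) →
          (e k).1.2.2 t = a.1.2.2 t := by
        intro k
        rcases le_total a.1.1 (u k) with hab | hab
        · have h2 := (hcomp a ha (e k) (he_mem k) (by rw [he_eq]; exact hab)).2.2
          filter_upwards [h2] with t h1 ht _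
          exact h1 ht
        · have h2 := (hcomp (e k) (he_mem k) a ha (by rw [he_eq]; exact hab)).2.2
          filter_upwards [h2] with t h1 _ htk
          exact (h1 (by rw [hI]; exact htk)).symm
      filter_upwards [ae_all_iff.2 hpair] with t h1 ht
      obtain ⟨k, hk⟩ := hexk a ha t ht
      obtain ⟨hg1, hg2⟩ := glue_eq t₀ u (fun k => (e k).1.2.2) y ⟨k, hk⟩
      rw [hymdef, hg1]
      exact h1 _ ht hg2
    have hym_e : ∀ k : ℕ, ∀ᵐ t ∂volume, t ∈ Ival t₀ (u k) → ym t = (e k).1.2.2 t := by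
      intro k
      filter_upwards [hym (e k) (he_mem k)] with t h1 ht
      exact h1 (by rw [hI]; exact ht)
    have hxm_e : ∀ k : ℕ, ∀ t ∈ Ival t₀ (u k), xm t = (e k).1.2.1 t := fun k t ht =>
      hxm (e k) (he_mem k) t (by rw [hI]; exact ht)
    have hτS : (t₀ : EReal) < S := by
      obtain ⟨a, ha⟩ := hne
      exact lt_of_lt_of_le a.2.1.hτ (hle_S a ha)
    have hSmem : ∀ t ∈ Ival t₀ S, ∃ k, t ∈ Ival t₀ (u k) := by
      intro t ht
      obtain ⟨k, hk⟩ := hSk t ht.2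
      exact ⟨k, hk ht.1⟩
    -- integrability transfer
    have hIcc : ∀ (k : ℕ) (t : ℝ), t ∈ Ival t₀ (u k) → Icc t₀ t ⊆ Ival t₀ (u k) := by
      intro k t ht s hs
      exact ⟨hs.1, lt_of_le_of_lt (EReal.coe_le_coe_iff.2 hs.2) ht.2⟩
    have hym_ae_Icc : ∀ (k : ℕ) (t : ℝ), t ∈ Ival t₀ (u k) →
        ym =ᶠ[ae (volume.restrict (Icc t₀ t))] (e k).1.2.2 := by
      intro k t ht
      filter_upwards [ae_restrict_of_ae (hym_e k), ae_restrict_mem measurableSet_Icc]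
        with s h1 h2
      exact h1 (hIcc k t ht h2)
    have hpre : IsPreTraj A B Be C D De f v xm ym t₀ S := by
      refine ⟨h.ht₀, hτS, h.hv, ?_, ?_, ?_, ?_, ?_⟩
      · -- continuity
        intro t ht
        obtain ⟨k, hk⟩ := hSmem t ht
        have hO : {s : ℝ | (s : EReal) < u k} ∈ 𝓝 t :=
          (isOpen_lt continuous_coe_real_ereal continuous_const).mem_nhds hk.2
        rw [← continuousWithinAt_inter hO]
        have hsub : Ival t₀ S ∩ {s : ℝ | (s : EReal) < u k} ⊆ Ival t₀ ((e k).1.1) := by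
          rw [hI]; rintro s ⟨hs1, hs2⟩; exact ⟨hs1.1, hs2⟩
        have hcw : ContinuousWithinAt (e k).1.2.1 (Ival t₀ ((e k).1.1)) t :=
          ((e k).2.1.hxc).continuousWithinAt (by rw [hI]; exact hk)
        refine ((hcw.mono hsub).congr ?_ ?_)
        · intro s hs
          exact hxm_e k s (by rw [← hI]; exact hsub hs)
        · exact hxm_e k t hk
      · -- integrability of ym
        intro t ht
        obtain ⟨k, hk⟩ := hSmem t ht
        have hint := (e k).2.1.hy t (by rw [hI]; exact hk)
        exact hint.congr (hym_ae_Icc k t hk).symm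
      · -- integrability of f ∘ ym
        intro t ht
        obtain ⟨k, hk⟩ := hSmem t ht
        have hint := (e k).2.1.hfy t (by rw [hI]; exact hk)
        refine hint.congr ?_
        filter_upwards [hym_ae_Icc k t hk] with s hs
        rw [hs]
      · -- the integrated ODE
        intro t ht
        obtain ⟨k, hk⟩ := hSmem t ht
        have ht0k : t₀ ∈ Ival t₀ (u k) := ⟨le_refl _, by rw [← he_eq]; exact (e k).2.1.hτ⟩
        rw [hxm_e k t hk, hxm_e k t₀ ht0k, (e k).2.1.hode t (by rw [hI]; exact hk)]
        congr 1
        refine setIntegral_congr_ae measurableSet_Icc ?_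
        filter_upwards [hym_e k] with s h1 hs
        have hsI : s ∈ Ival t₀ (u k) := hIcc k t hk hs
        rw [h1 hsI, hxm_e k s hsI]
      · -- the output equation
        have H : ∀ k : ℕ, ∀ᵐ t ∂volume,
            (t ∈ Ival t₀ ((e k).1.1) →
              (e k).1.2.2 t = C ((e k).1.2.1 t) + D (f t ((e k).1.2.2 t)) + De (v t)) ∧
            (t ∈ Ival t₀ (u k) → ym t = (e k).1.2.2 t) := fun k =>
          ((e k).2.1.hout).and (hym_e k)
        filter_upwards [ae_all_iff.2 H] with t hA ht
        obtain ⟨k, hk⟩ := hSmem t ht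
        rw [(hA k).2 hk, hxm_e k t hk]
        exact (hA k).1 (by rw [hI]; exact hk)
    have hPE : P (S, xm, ym) := by
      obtain ⟨a, ha⟩ := hne
      refine ⟨hpre, le_trans a.2.2.1 (hle_S a ha), ?_, ?_⟩
      · intro t ht
        show xm t = x t
        rw [hxm a ha t (Ival_mono' a.2.2.1 ht), a.2.2.2.1 t ht]
      · filter_upwards [hym a ha, a.2.2.2.2] with t h1 h2 ht
        show ym t = y t
        rw [h1 (Ival_mono' a.2.2.1 ht), h2 ht]
    exact ⟨⟨(S, xm, ym), hPE⟩, fun a ha => ⟨hle_S a ha, hxm a ha, hym a ha⟩⟩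
  obtain ⟨mx, hmx⟩ := exists_maximal_of_chains_bounded hbound
    (fun hab hbc => extRel_trans hab hbc)
  refine ⟨mx.1.1, mx.1.2.1, mx.1.2.2, mx.2.2.1, ⟨mx.2.1, ?_⟩, mx.2.2.2.1, mx.2.2.2.2⟩
  rintro ⟨τ', x', y', hlt, hpt, hxag, hyag⟩
  have hPa : P (τ', x', y') := by
    refine ⟨hpt, le_trans mx.2.2.1 (le_of_lt hlt), ?_, ?_⟩
    · intro t ht
      show x' t = x t
      rw [hxag t (Ival_mono' mx.2.2.1 ht), mx.2.2.2.1 t ht]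
    · filter_upwards [hyag, mx.2.2.2.2] with t h1 h2 ht
      show y' t = y t
      rw [h1 (Ival_mono' mx.2.2.1 ht), h2 ht]
  have hr2 := hmx ⟨(τ', x', y'), hPa⟩ ⟨le_of_lt hlt, hxag, hyag⟩
  exact absurd hr2.1 (not_le_of_gt hlt)
end
end

section
/- If assumptions (A1) and (A2) are satisfied, then for every t ≥ 0 and every ξ ∈ im(C,D_e) the set F_t⁻¹(ξ) is nonempty and compact, and, for every t ≥ 0, the set-valued map ξ ↦ F_t⁻¹(ξ) is upper semicontinuous on im(C,D_e). -/
open MeasureTheory Filter Set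
open scoped Topology RealInnerProductSpace ENNReal

noncomputable section

variable {n m me p : ℕ}

variable (A : Euc n →L[ℝ] Euc n) (B : Euc m →L[ℝ] Euc n) (Be : Euc me →L[ℝ] Euc n)
  (C : Euc n →L[ℝ] Euc p) (D : Euc m →L[ℝ] Euc p) (De : Euc me →L[ℝ] Euc p)
  (f : ℝ → Euc p → Euc m)

/-- Under (A1) and (A2), for every `t ≥ 0` and every `ξ ∈ im(C, D_e)` the fibre
`F_t⁻¹(ξ)` is nonempty and compact, and the set-valued map `ξ ↦ F_t⁻¹(ξ)` is upper
semicontinuous on `im(C, D_e)`. -/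
theorem fibres_compact_and_usc
    (hf : Caratheodory f)
    (hA1 : ∀ t ≥ (0 : ℝ), ∀ ξ ∈ imCDe C De, (Finv D f t ξ).Nonempty)
    (hA2 : RadUnbddLocUnif D f) :
    ∀ t ≥ (0 : ℝ),
      (∀ ξ ∈ imCDe C De, (Finv D f t ξ).Nonempty ∧ IsCompact (Finv D f t ξ)) ∧
      ∀ ξ ∈ imCDe C De, ∀ U : Set (Euc p), IsOpen U → Finv D f t ξ ⊆ U →
        ∃ V : Set (Euc p), IsOpen V ∧ ξ ∈ V ∧
          ∀ ζ ∈ V, ζ ∈ imCDe C De → Finv D f t ζ ⊆ U := by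
  intro t ht
  have hFc : Continuous (Fmap D f t) :=
    continuous_id.sub (D.continuous.comp (hf.1 t))
  constructor
  · intro ξ hξ
    refine ⟨hA1 t ht ξ hξ, ?_⟩
    obtain ⟨σ, hσ0, hσ⟩ := hA2 (‖ξ‖ + 1) (by positivity) {t}
      (singleton_subset_iff.mpr ht) isCompact_singleton
    have hsub : Finv D f t ξ ⊆ Metric.closedBall 0 σ := by
      intro ζ hζ
      simp only [Metric.mem_closedBall, dist_zero_right]
      by_contra h
      push_neg at h
      have h2 := hσ t rfl ζ h.le
      have hζ' : Fmap D f t ζ = ξ := hζ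
      rw [hζ'] at h2
      linarith
    have hclosed : IsClosed (Finv D f t ξ) := isClosed_singleton.preimage hFc
    exact (isCompact_closedBall _ _).of_isClosed_subset hclosed hsub
  · intro ξ hξ U hU hUsub
    obtain ⟨σ, hσ0, hσ⟩ := hA2 (‖ξ‖ + 1) (by positivity) {t}
      (singleton_subset_iff.mpr ht) isCompact_singleton
    set K : Set (Euc p) := Metric.closedBall 0 σ ∩ Uᶜ with hK
    have hKc : IsCompact K := (isCompact_closedBall _ _).inter_right hU.isClosed_compl
    have hFK : IsCompact (Fmap D f t '' K) := hKc.image hFc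
    have hξnot : ξ ∉ Fmap D f t '' K := by
      rintro ⟨η, ⟨-, hηU⟩, hη⟩
      exact hηU (hUsub hη)
    refine ⟨(Fmap D f t '' K)ᶜ ∩ Metric.ball ξ 1,
      (hFK.isClosed.isOpen_compl).inter Metric.isOpen_ball,
      ⟨hξnot, Metric.mem_ball_self one_pos⟩, ?_⟩
    rintro ζ ⟨hζ1, hζ2⟩ - η hη
    have hη' : Fmap D f t η = ζ := hη
    by_contra hηU
    have hζnorm : ‖ζ‖ < ‖ξ‖ + 1 := by
      have := mem_ball_iff_norm.mp hζ2
      have h3 := norm_sub_norm_le ζ ξ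
      linarith
    have hησ : ‖η‖ < σ := by
      by_contra h
      push_neg at h
      have h2 := hσ t rfl η h
      rw [hη'] at h2
      linarith
    exact hζ1 ⟨η, ⟨Metric.mem_closedBall.mpr (by simpa using hησ.le), hηU⟩, hη'⟩
end
end

section
/- For every Lebesgue measurable function w : ℝ₊ → ℝ^p, the set-valued map t ↦ F_t⁻¹(w(t)) = {ξ ∈ ℝ^p : F(t,ξ) = w(t)} is measurable; that is, for every open set U ⊆ ℝ^p, the set {t ∈ ℝ₊ : there exists ξ ∈ U with F(t,ξ) = w(t)} is Lebesgue measurable. -/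
open MeasureTheory Filter Set
open scoped Topology RealInnerProductSpace ENNReal

noncomputable section

variable {n m me p : ℕ}

variable (A : Euc n →L[ℝ] Euc n) (B : Euc m →L[ℝ] Euc n) (Be : Euc me →L[ℝ] Euc n)
  (C : Euc n →L[ℝ] Euc p) (D : Euc m →L[ℝ] Euc p) (De : Euc me →L[ℝ] Euc p)
  (f : ℝ → Euc p → Euc m)

/-- For every Lebesgue measurable `w : ℝ₊ → ℝ^p`, the set-valued map
`t ↦ F_t⁻¹(w(t))` is measurable: for every open `U ⊆ ℝ^p`, the set
`{t ∈ ℝ₊ : ∃ ξ ∈ U, F(t, ξ) = w(t)}` is Lebesgue measurable. -/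
theorem fibre_map_measurable
    (hf : Caratheodory f)
    (w : ℝ → Euc p) (hw : NullMeasurable w (volume : Measure ℝ)) :
    ∀ U : Set (Euc p), IsOpen U →
      NullMeasurableSet {t : ℝ | 0 ≤ t ∧ ∃ ξ ∈ U, Fmap D f t ξ = w t}
        (volume : Measure ℝ) := by
  intro U hU
  -- a countable set `c ⊆ U` that is dense in `U`
  obtain ⟨c, hcU, hccount, hcdense⟩ : ∃ c ⊆ U, c.Countable ∧ U ⊆ closure c := by
    obtain ⟨c₀, hc₀, hd⟩ := TopologicalSpace.exists_countable_dense ↥U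
    refine ⟨Subtype.val '' c₀, by simp, hc₀.image _, fun x hx => ?_⟩
    rw [← closure_subtype (x := ⟨x, hx⟩)]
    exact hd _
  -- the countable family of closed balls with centers in `c`, rational radii,
  -- contained in `U`
  set T : Set (Euc p × ℚ) :=
    {j | j.1 ∈ c ∧ 0 < (j.2 : ℝ) ∧ Metric.closedBall j.1 (j.2 : ℝ) ⊆ U} with hT
  have hTc : T.Countable := by
    apply (hccount.prod (Set.to_countable (univ : Set ℚ))).mono
    intro j hj
    rw [hT] at hj
    exact Set.mem_prod.mpr ⟨hj.1, mem_univ _⟩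
  -- measurability of the elementary pieces
  have hpiece : ∀ (ζ : Euc p) (a : ℝ),
      NullMeasurableSet {t : ℝ | ‖Fmap D f t ζ - w t‖ < a} volume := by
    intro ζ a
    have h1 : Measurable (fun t => Fmap D f t ζ) := by
      unfold Fmap
      exact measurable_const.sub (D.continuous.measurable.comp (hf.2 ζ))
    have h2 : NullMeasurable (fun t => ‖Fmap D f t ζ - w t‖) volume :=
      (Measurable.sub h1.nullMeasurable hw).norm
    exact h2 measurableSet_Iio
  -- the key set identity
  have key : {t : ℝ | 0 ≤ t ∧ ∃ ξ ∈ U, Fmap D f t ξ = w t}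
      = Ici (0 : ℝ) ∩ ⋃ j ∈ T, ⋂ n : ℕ,
          ⋃ ζ ∈ c ∩ Metric.ball j.1 (j.2 : ℝ),
            {t : ℝ | ‖Fmap D f t ζ - w t‖ < 1 / (n + 1)} := by
    ext t
    simp only [hT, mem_setOf_eq, mem_inter_iff, mem_Ici, mem_iUnion, mem_iInter,
      exists_prop]
    constructor
    · rintro ⟨ht, ξ, hξU, hξ⟩
      refine ⟨ht, ?_⟩
      obtain ⟨ε, hε, hball⟩ := Metric.isOpen_iff.1 hU ξ hξU
      have hclo := hcdense hξU
      obtain ⟨q, hqc, hqd⟩ := Metric.mem_closure_iff.1 hclo (ε / 4) (by linarith)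
      obtain ⟨r, hr1, hr2⟩ := exists_rat_btwn (show dist ξ q < ε / 2 by linarith)
      have hrpos : (0 : ℝ) < r := lt_of_le_of_lt dist_nonneg hr1
      refine ⟨(q, r), ⟨hqc, hrpos, ?_⟩, ?_⟩
      · intro z hz
        apply hball
        rw [Metric.mem_ball]
        have hz' : dist z q ≤ (r : ℝ) := hz
        calc dist z ξ ≤ dist z q + dist q ξ := dist_triangle _ _ _
          _ = dist z q + dist ξ q := by rw [dist_comm q ξ]
          _ < ε / 2 + ε / 4 := by linarith
          _ < ε := by linarith
      · intro n
        have hnpos : (0 : ℝ) < 1 / (n + 1) := by positivity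
        have hcont : ContinuousAt (fun ζ => Fmap D f t ζ) ξ := by
          have : Continuous (fun ζ => Fmap D f t ζ) := by
            unfold Fmap
            exact continuous_id.sub (D.continuous.comp (hf.1 t))
          exact this.continuousAt
        obtain ⟨δ, hδ, hδ'⟩ := Metric.continuousAt_iff.1 hcont _ hnpos
        have hmpos : 0 < min δ ((r : ℝ) - dist ξ q) := by
          apply lt_min hδ; linarith
        obtain ⟨ζ, hζc, hζd⟩ := Metric.mem_closure_iff.1 hclo _ hmpos
        have hζd1 : dist ξ ζ < δ := lt_of_lt_of_le hζd (min_le_left _ _)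
        have hζd2 : dist ξ ζ < (r : ℝ) - dist ξ q :=
          lt_of_lt_of_le hζd (min_le_right _ _)
        refine ⟨ζ, ⟨hζc, ?_⟩, ?_⟩
        · rw [Metric.mem_ball]
          calc dist ζ q ≤ dist ζ ξ + dist ξ q := dist_triangle _ _ _
            _ = dist ξ ζ + dist ξ q := by rw [dist_comm ζ ξ]
            _ < ((r : ℝ) - dist ξ q) + dist ξ q := by linarith
            _ = (r : ℝ) := by ring
        · have := hδ' (show dist ζ ξ < δ by rwa [dist_comm])
          rw [dist_eq_norm] at this
          rw [← hξ]
          exact this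
    · rintro ⟨ht, j, ⟨hqc, hrpos, hsub⟩, hall⟩
      refine ⟨ht, ?_⟩
      obtain ⟨ζ₀, hζ₀, _⟩ := hall 0
      have hne : (Metric.closedBall j.1 (j.2 : ℝ)).Nonempty :=
        ⟨ζ₀, Metric.ball_subset_closedBall hζ₀.2⟩
      have hgc : ContinuousOn (fun ζ => ‖Fmap D f t ζ - w t‖)
          (Metric.closedBall j.1 (j.2 : ℝ)) := by
        apply Continuous.continuousOn
        unfold Fmap
        exact ((continuous_id.sub (D.continuous.comp (hf.1 t))).sub
          continuous_const).norm
      obtain ⟨ξ, hξK, hξmin⟩ :=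
        (isCompact_closedBall j.1 (j.2 : ℝ)).exists_isMinOn hne hgc
      refine ⟨ξ, hsub hξK, ?_⟩
      have h0 : ‖Fmap D f t ξ - w t‖ = 0 := by
        by_contra h
        have hpos : 0 < ‖Fmap D f t ξ - w t‖ :=
          lt_of_le_of_ne (norm_nonneg _) (Ne.symm h)
        obtain ⟨n, hn⟩ := exists_nat_one_div_lt hpos
        obtain ⟨ζ, hζ, hζlt⟩ := hall n
        have hζK : ζ ∈ Metric.closedBall j.1 (j.2 : ℝ) :=
          Metric.ball_subset_closedBall hζ.2
        have : ‖Fmap D f t ξ - w t‖ < 1 / (n + 1) :=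
          lt_of_le_of_lt (hξmin hζK) hζlt
        exact absurd (this.trans hn) (lt_irrefl _)
      have := norm_eq_zero.mp h0
      exact sub_eq_zero.mp this
  rw [key]
  exact measurableSet_Ici.nullMeasurableSet.inter
    (NullMeasurableSet.biUnion hTc fun j hj =>
      NullMeasurableSet.iInter fun n =>
        NullMeasurableSet.biUnion (hccount.mono inter_subset_left)
          fun ζ hζ => hpiece ζ _)
end
end

section
/- Assume condition (Lip) holds and, for all compact sets T ⊂ ℝ₊ and K ⊂ ℝ^p, there exists b > 0 such that ‖D f(t,ξ)‖ ≤ b for all t ∈ T and all ξ ∈ K. If, for every compact set T ⊂ ℝ₊, there exist ρ > 0 and either b₁ < 1 such that ⟨D(d f_t)(ξ)ζ, ζ⟩ ≤ b₁‖ζ‖² for all ζ ∈ ℝ^p, all t ∈ T and all ξ ∈ (ℝ^p ∖ B(0,ρ)) ∖ N_{f_t}, or b₂ > 1 such that ⟨D(d f_t)(ξ)ζ, ζ⟩ ≥ b₂‖ζ‖² for all ζ ∈ ℝ^p, all t ∈ T and all ξ ∈ (ℝ^p ∖ B(0,ρ)) ∖ N_{f_t}, then F_t is radially unbounded, locally uniformly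 in t. -/
open MeasureTheory Filter Set
open scoped Topology RealInnerProductSpace ENNReal

noncomputable section

variable {n m me p : ℕ}

variable (A : Euc n →L[ℝ] Euc n) (B : Euc m →L[ℝ] Euc n) (Be : Euc me →L[ℝ] Euc n)
  (C : Euc n →L[ℝ] Euc p) (D : Euc m →L[ℝ] Euc p) (De : Euc me →L[ℝ] Euc p)
  (f : ℝ → Euc p → Euc m)

/-!
Outside the ball of radius `ρ`, the derivative condition makes `F_t = id - D ∘ f_t` strongly
monotone (case `b₁ < 1`) or strongly antimonotone (case `b₂ > 1`) along segments, so
`‖F_t(r e) - F_t(r₀ e)‖ ≥ c (r - r₀)` along every ray `r ↦ r e` beyond a radius `r₀ > ρ`;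
together with the bound on `F_t` over the sphere of radius `r₀` this gives radial unboundedness,
uniformly for `t` in compact sets. Since `f_t` is only locally Lipschitz, its derivative exists
only almost everywhere (Rademacher), so the mean value inequality along a segment goes through
Fubini: almost every parallel translate of the segment meets the non-differentiability set in a
null set, on those the fundamental theorem of calculus for absolutely continuous functions
applies, and continuity transfers the inequality to the segment itself.
-/

open scoped NNReal

theorem LipschitzOnWith.sub_le_of_ae_hasDerivAt_le {ψ : ℝ → ℝ} {K : ℝ≥0} {a b M : ℝ}
    (hab : a ≤ b) (hψ : LipschitzOnWith K ψ (Icc a b))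
    (hderiv : ∀ᵐ s, s ∈ Ioo a b → ∃ d ≤ M, HasDerivAt ψ d s) :
    ψ b - ψ a ≤ M * (b - a) := by
  have hac := (uIcc_of_le hab ▸ hψ).absolutelyContinuousOnInterval
  rw [← hac.integral_deriv_eq_sub]
  calc ∫ s in a..b, deriv ψ s ≤ ∫ _ in a..b, M := by
        refine intervalIntegral.integral_mono_ae_restrict hab hac.intervalIntegrable_deriv
          intervalIntegrable_const ?_
        rw [EventuallyLE, ae_restrict_iff' measurableSet_Icc]
        filter_upwards [hderiv, Ioo_ae_eq_Icc.mem_iff] with s hs hIoo hIcc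
        obtain ⟨d, hdM, hd⟩ := hs (hIoo.mpr hIcc)
        exact hd.deriv ▸ hdM
    _ = M * (b - a) := by rw [intervalIntegral.integral_const, smul_eq_mul, mul_comm]

theorem ContinuousAt.le_of_ae_le {X α : Type*} [TopologicalSpace X] [MeasurableSpace X]
    {μ : Measure X} [μ.IsOpenPosMeasure] [LinearOrder α] [TopologicalSpace α]
    [ClosedIicTopology α] {Φ : X → α} {x : X} {W : Set X} {M : α}
    (hΦ : ContinuousAt Φ x) (hW : W ∈ 𝓝 x) (h : ∀ᵐ y ∂μ, y ∈ W → Φ y ≤ M) : Φ x ≤ M := by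
  by_contra! hlt
  have hnhds : {y | y ∈ W ∧ M < Φ y} ∈ 𝓝 x := inter_mem hW (hΦ.eventually (Ioi_mem_nhds hlt))
  have hnull : μ {y | y ∈ W ∧ M < Φ y} = 0 := by
    rw [ae_iff] at h
    simpa only [Classical.not_imp, not_le] using h
  exact (Measure.measure_pos_of_mem_nhds μ hnhds).ne' hnull

section

variable {E F : Type*} [NormedAddCommGroup E] [NormedSpace ℝ E] [FiniteDimensional ℝ E]
  [NormedAddCommGroup F] [NormedSpace ℝ F] [FiniteDimensional ℝ F]

theorem LocallyLipschitz.ae_differentiableAt [MeasurableSpace E] [BorelSpace E]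
    {μ : Measure E} [μ.IsAddHaarMeasure] {g : E → F} (hg : LocallyLipschitz g) :
    ∀ᵐ x ∂μ, DifferentiableAt ℝ g x := by
  refine measure_null_of_locally_null _ fun x _ => ?_
  obtain ⟨K, t, ht, hK⟩ := hg x
  refine ⟨_, inter_mem_nhdsWithin _ (interior_mem_nhds.2 ht), measure_mono_null ?_
    (ae_iff.1 hK.ae_differentiableWithinAt_of_mem)⟩
  rintro y ⟨hy, hyt⟩ hdiff
  exact hy ((hdiff (interior_subset hyt)).differentiableAt (mem_interior_iff_mem_nhds.1 hyt))

theorem LocallyLipschitz.sub_le_of_fderiv_le {g : E → F} (hg : LocallyLipschitz g)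
    (ℓ : F →L[ℝ] ℝ) {U : Set E} (hU : IsOpen U) {x u : E} {M : ℝ}
    (hseg : ∀ s ∈ Icc (0 : ℝ) 1, x + s • u ∈ U)
    (hM : ∀ y ∈ U, DifferentiableAt ℝ g y → ℓ (fderiv ℝ g y u) ≤ M) :
    ℓ (g (x + u)) - ℓ (g x) ≤ M := by
  borelize E
  have hnear : ∀ᶠ y in 𝓝 x, ∀ s ∈ Icc (0 : ℝ) 1, y + s • u ∈ U :=
    isCompact_Icc.eventually_forall_of_forall_eventually fun s hs =>
      (continuous_fst.add (continuous_snd.smul continuous_const)).continuousAt.eventually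
        (hU.mem_nhds (hseg s hs))
  have hlines : ∀ᵐ y ∂(Measure.addHaar : Measure E), ∀ᵐ s : ℝ,
      DifferentiableAt ℝ g (y + s • u) :=
    (ae_ae_add_linearMap_mem_iff ((LinearMap.id : ℝ →ₗ[ℝ] ℝ).smulRight u) volume _
      (measurableSet_of_differentiableAt ℝ g)).2 hg.ae_differentiableAt
  have hcont : Continuous fun y => ℓ (g (y + u)) - ℓ (g y) :=
    (ℓ.continuous.comp (hg.continuous.comp (continuous_add_const u))).sub
      (ℓ.continuous.comp hg.continuous)
  refine hcont.continuousAt.le_of_ae_le (μ := Measure.addHaar) hnear ?_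
  filter_upwards [hlines] with y hy hyU
  have hline : LocallyLipschitz fun s : ℝ => ℓ (g (y + s • u)) :=
    ℓ.lipschitz.locallyLipschitz.comp (hg.comp (ContDiff.locallyLipschitz (𝕂 := ℝ) (by fun_prop)))
  obtain ⟨K, hK⟩ := hline.locallyLipschitzOn.exists_lipschitzOnWith_of_compact isCompact_Icc
  have hψ := hK.sub_le_of_ae_hasDerivAt_le zero_le_one <| by
    filter_upwards [hy] with s hs hsI
    refine ⟨_, hM _ (hyU s (Ioo_subset_Icc_self hsI)) hs, ?_⟩
    have hpath : HasDerivAt (fun s : ℝ => y + s • u) u s := by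
      simpa using ((hasDerivAt_id s).smul_const u).const_add y
    exact ℓ.hasFDerivAt.comp_hasDerivAt s (hs.hasFDerivAt.comp_hasDerivAt s hpath)
  simpa using hψ

end

theorem mul_norm_le_norm_of_mul_sq_le_inner {E : Type*} [NormedAddCommGroup E]
    [InnerProductSpace ℝ E] {u v : E} {c : ℝ} (h : c * ‖u‖ ^ 2 ≤ ⟪v, u⟫) : c * ‖u‖ ≤ ‖v‖ := by
  rcases (norm_nonneg u).eq_or_lt with hu | hu
  · simp [← hu]
  · refine le_of_mul_le_mul_right ?_ hu
    calc c * ‖u‖ * ‖u‖ = c * ‖u‖ ^ 2 := by ring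
      _ ≤ ‖v‖ * ‖u‖ := h.trans (real_inner_le_norm v u)

theorem lt_norm_smul_add_smul_smul_sub {E : Type*} [NormedAddCommGroup E] [NormedSpace ℝ E]
    {e : E} (he : ‖e‖ = 1) {ρ₀ r₀ r s : ℝ} (hr₀ : ρ₀ < r₀) (hr : r₀ ≤ r)
    (hs : s ∈ Icc (0 : ℝ) 1) : ρ₀ < ‖r₀ • e + s • ((r - r₀) • e)‖ := by
  rw [smul_smul, ← add_smul, norm_smul, he, mul_one, Real.norm_eq_abs]
  nlinarith [le_abs_self (r₀ + s * (r - r₀)), hs.1]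

section

variable {E F : Type*} [NormedAddCommGroup E] [InnerProductSpace ℝ E] [FiniteDimensional ℝ E]
  [NormedAddCommGroup F] [NormedSpace ℝ F] [FiniteDimensional ℝ F]
  {g : E → F} {U : Set E} {x u e : E} {b ρ₀ r₀ r : ℝ}

theorem LocallyLipschitz.inner_sub_le_of_inner_fderiv_le (hg : LocallyLipschitz g)
    (D : F →L[ℝ] E) (hU : IsOpen U) (hseg : ∀ s ∈ Icc (0 : ℝ) 1, x + s • u ∈ U)
    (hb : ∀ y ∈ U, DifferentiableAt ℝ g y → ∀ v, ⟪D (fderiv ℝ g y v), v⟫ ≤ b * ‖v‖ ^ 2) :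
    ⟪D (g (x + u)) - D (g x), u⟫ ≤ b * ‖u‖ ^ 2 := by
  simpa [inner_sub_left] using hg.sub_le_of_fderiv_le ((innerSLFlip ℝ u).comp D) hU hseg
    fun y hy hdiff => hb y hy hdiff u

theorem LocallyLipschitz.le_inner_sub_of_le_inner_fderiv (hg : LocallyLipschitz g)
    (D : F →L[ℝ] E) (hU : IsOpen U) (hseg : ∀ s ∈ Icc (0 : ℝ) 1, x + s • u ∈ U)
    (hb : ∀ y ∈ U, DifferentiableAt ℝ g y → ∀ v, b * ‖v‖ ^ 2 ≤ ⟪D (fderiv ℝ g y v), v⟫) :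
    b * ‖u‖ ^ 2 ≤ ⟪D (g (x + u)) - D (g x), u⟫ := by
  have hneg := hg.inner_sub_le_of_inner_fderiv_le (-D) hU hseg (b := -b) fun y hy hdiff v => by
    simpa [inner_neg_left] using hb y hy hdiff v
  simp only [neg_apply, inner_sub_left, inner_neg_left] at hneg ⊢
  linarith

theorem LocallyLipschitz.mul_sub_le_norm_sub_of_inner_fderiv_le (hg : LocallyLipschitz g)
    (D : F →L[ℝ] E) (hb : ∀ y, y ∉ Metric.ball (0 : E) ρ₀ → DifferentiableAt ℝ g y →
      ∀ v, ⟪D (fderiv ℝ g y v), v⟫ ≤ b * ‖v‖ ^ 2)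
    (he : ‖e‖ = 1) (hr₀ : ρ₀ < r₀) (hr : r₀ ≤ r) :
    (1 - b) * (r - r₀) ≤ ‖(r • e - D (g (r • e))) - (r₀ • e - D (g (r₀ • e)))‖ := by
  set u := (r - r₀) • e
  have hu : ‖u‖ = r - r₀ := by simp [u, norm_smul, he, abs_of_nonneg (sub_nonneg.2 hr)]
  have hru : r₀ • e + u = r • e := by simp only [u, ← add_smul, add_sub_cancel]
  have hinner := hg.inner_sub_le_of_inner_fderiv_le D (isOpen_lt continuous_const continuous_norm)
    (fun s hs => lt_norm_smul_add_smul_smul_sub he hr₀ hr hs)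
    fun y hy => hb y (by simpa using hy.le)
  rw [hru] at hinner
  rw [← hu]
  refine mul_norm_le_norm_of_mul_sq_le_inner ?_
  rw [show r • e - D (g (r • e)) - (r₀ • e - D (g (r₀ • e)))
      = u - (D (g (r • e)) - D (g (r₀ • e))) by rw [← hru]; abel,
    inner_sub_left, real_inner_self_eq_norm_sq]
  linarith

theorem LocallyLipschitz.mul_sub_le_norm_sub_of_le_inner_fderiv (hg : LocallyLipschitz g)
    (D : F →L[ℝ] E) (hb : ∀ y, y ∉ Metric.ball (0 : E) ρ₀ → DifferentiableAt ℝ g y →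
      ∀ v, b * ‖v‖ ^ 2 ≤ ⟪D (fderiv ℝ g y v), v⟫)
    (he : ‖e‖ = 1) (hr₀ : ρ₀ < r₀) (hr : r₀ ≤ r) :
    (b - 1) * (r - r₀) ≤ ‖(r • e - D (g (r • e))) - (r₀ • e - D (g (r₀ • e)))‖ := by
  set u := (r - r₀) • e
  have hu : ‖u‖ = r - r₀ := by simp [u, norm_smul, he, abs_of_nonneg (sub_nonneg.2 hr)]
  have hru : r₀ • e + u = r • e := by simp only [u, ← add_smul, add_sub_cancel]
  have hinner := hg.le_inner_sub_of_le_inner_fderiv D (isOpen_lt continuous_const continuous_norm)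
    (fun s hs => lt_norm_smul_add_smul_smul_sub he hr₀ hr hs)
    fun y hy => hb y (by simpa using hy.le)
  rw [hru] at hinner
  rw [← hu, norm_sub_rev]
  refine mul_norm_le_norm_of_mul_sq_le_inner ?_
  rw [show r₀ • e - D (g (r₀ • e)) - (r • e - D (g (r • e)))
      = (D (g (r • e)) - D (g (r₀ • e))) - u by rw [← hru]; abel,
    inner_sub_left, real_inner_self_eq_norm_sq]
  linarith

end

theorem sub_le_norm_of_ray_growth {E F : Type*} [NormedAddCommGroup E] [NormedSpace ℝ E]
    [NormedAddCommGroup F] {Φ : E → F} {ρ₁ c B : ℝ} (hρ₁ : 0 < ρ₁)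
    (hbase : ∀ e : E, ‖e‖ = 1 → ‖Φ (ρ₁ • e)‖ ≤ B)
    (hgrowth : ∀ e : E, ‖e‖ = 1 → ∀ r ≥ ρ₁, c * (r - ρ₁) ≤ ‖Φ (r • e) - Φ (ρ₁ • e)‖)
    {ξ : E} (hξ : ρ₁ ≤ ‖ξ‖) : c * (‖ξ‖ - ρ₁) - B ≤ ‖Φ ξ‖ := by
  have hξ0 : ξ ≠ 0 := norm_pos_iff.1 (hρ₁.trans_le hξ)
  have he : ‖‖ξ‖⁻¹ • ξ‖ = 1 := norm_smul_inv_norm hξ0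
  have hgrowthξ := hgrowth _ he ‖ξ‖ hξ
  rw [smul_inv_smul₀ (norm_ne_zero_iff.2 hξ0)] at hgrowthξ
  linarith [hbase _ he, norm_sub_le (Φ ξ) (Φ (ρ₁ • ‖ξ‖⁻¹ • ξ))]

theorem CondLip.locallyLipschitz {f : ℝ → Euc p → Euc m} (hlip : CondLip f) {t : ℝ}
    (ht : 0 ≤ t) : LocallyLipschitz (f t) := by
  intro x
  obtain ⟨lam, hlam, hbound⟩ := hlip _ (isCompact_closedBall x 1)
  refine ⟨(lam t).toNNReal, _, Metric.closedBall_mem_nhds x one_pos,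
    LipschitzOnWith.of_dist_le_mul fun ξ hξ ζ hζ => ?_⟩
  simpa [dist_eq_norm, hlam.1 t] using hbound t ht ξ hξ ζ hζ

theorem radUnbdd_of_derivative_dichotomy
    (hlip : CondLip f)
    (hbdd : ∀ T : Set ℝ, T ⊆ Ici 0 → IsCompact T → ∀ K : Set (Euc p), IsCompact K →
      ∃ b : ℝ, ∀ t ∈ T, ∀ ξ ∈ K, ‖D (f t ξ)‖ ≤ b)
    (hdichot : ∀ T : Set ℝ, T ⊆ Ici 0 → IsCompact T →
      ∃ ρ > (0 : ℝ),
        (∃ b₁ < (1 : ℝ), ∀ t ∈ T, ∀ ξ : Euc p,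
          ξ ∉ Metric.ball (0 : Euc p) ρ → DifferentiableAt ℝ (f t) ξ →
          ∀ ζ : Euc p, ⟪D ((fderiv ℝ (f t) ξ) ζ), ζ⟫ ≤ b₁ * ‖ζ‖ ^ 2) ∨
        (∃ b₂ > (1 : ℝ), ∀ t ∈ T, ∀ ξ : Euc p,
          ξ ∉ Metric.ball (0 : Euc p) ρ → DifferentiableAt ℝ (f t) ξ →
          ∀ ζ : Euc p, b₂ * ‖ζ‖ ^ 2 ≤ ⟪D ((fderiv ℝ (f t) ξ) ζ), ζ⟫)) :
    RadUnbddLocUnif D f := by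
  intro ρ hρ T hT hTc
  obtain ⟨ρ₀, hρ₀, hcase⟩ := hdichot T hT hTc
  set ρ₁ := ρ₀ + 1
  have hg : ∀ t ∈ T, LocallyLipschitz (f t) := fun t ht => hlip.locallyLipschitz (hT ht)
  obtain ⟨c, hc, hgrowth⟩ : ∃ c > (0 : ℝ), ∀ t ∈ T, ∀ e : Euc p, ‖e‖ = 1 → ∀ r ≥ ρ₁,
      c * (r - ρ₁) ≤ ‖Fmap D f t (r • e) - Fmap D f t (ρ₁ • e)‖ := by
    rcases hcase with ⟨b₁, hb₁, h⟩ | ⟨b₂, hb₂, h⟩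
    · exact ⟨1 - b₁, by linarith, fun t ht e he r hr =>
        (hg t ht).mul_sub_le_norm_sub_of_inner_fderiv_le D (h t ht) he (by linarith) hr⟩
    · exact ⟨b₂ - 1, by linarith, fun t ht e he r hr =>
        (hg t ht).mul_sub_le_norm_sub_of_le_inner_fderiv D (h t ht) he (by linarith) hr⟩
  obtain ⟨b, hb⟩ := hbdd T hT hTc (Metric.sphere 0 ρ₁) (isCompact_sphere 0 ρ₁)
  have hbase : ∀ t ∈ T, ∀ e : Euc p, ‖e‖ = 1 → ‖Fmap D f t (ρ₁ • e)‖ ≤ ρ₁ + b := by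
    intro t ht e he
    have hρ₁e : ‖ρ₁ • e‖ = ρ₁ := by simp [norm_smul, he, abs_of_pos (by linarith : 0 < ρ₁)]
    calc ‖Fmap D f t (ρ₁ • e)‖ ≤ ‖ρ₁ • e‖ + ‖D (f t (ρ₁ • e))‖ := norm_sub_le _ _
      _ ≤ ρ₁ + b := by rw [hρ₁e]; gcongr; exact hb t ht _ (by simpa using hρ₁e)
  refine ⟨ρ₁ + (ρ + |ρ₁ + b|) / c, by positivity, fun t ht ξ hξ => ?_⟩
  have hfar : ρ + |ρ₁ + b| ≤ c * (‖ξ‖ - ρ₁) := by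
    rw [← div_le_iff₀' hc]; linarith
  have hρ₁ξ : ρ₁ ≤ ‖ξ‖ := by linarith [div_nonneg (by positivity : 0 ≤ ρ + |ρ₁ + b|) hc.le]
  linarith [le_abs_self (ρ₁ + b),
    sub_le_norm_of_ray_growth (by linarith) (hbase t ht) (hgrowth t ht) hρ₁ξ]
end
end
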